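/- arXiv:1308.1070 — 3 statements merged into one kernel-verified Lean document; each statement's English description precedes it below -/
import Mathlib

section
/- Fix an integer N ≥ 1 and nonnegative weights w : ℤ × ℤ → ℝ satisfying the rotational symmetry w(i,j) = w(2N+1−i, 2N+1−j) for all i, j. Set M := max_{1 ≤ i ≤ 2N} [ G_w((1,1) → (i, 2N+1−i)) + G_w((1,1) → (2N+1−i, i)) ]. Then M − max_{1 ≤ i ≤ 2N} w(i, 2N+1−i) ≤ G_w((1,1) → (2N,2N)) ≤ M. (The discrepancy comes only from double-counting the weight at the unique anti-diagonal point of the maximizing path.) -/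
open MeasureTheory Filter

/-- `π` is an up/right path of length `ℓ` from `p` to `q`. -/
def IsURPath (π : ℕ → ℤ × ℤ) (ℓ : ℕ) (p q : ℤ × ℤ) : Prop :=
  π 0 = p ∧ π ℓ = q ∧
    ∀ r < ℓ, π (r + 1) - π r = ((1 : ℤ), (0 : ℤ)) ∨ π (r + 1) - π r = ((0 : ℤ), (1 : ℤ))

/-- The weight of the path `π` of length `ℓ` with respect to the weights `w`. -/
def pathWeight (w : ℤ × ℤ → ℝ) (π : ℕ → ℤ × ℤ) (ℓ : ℕ) : ℝ :=
  ∑ r ∈ Finset.range (ℓ + 1), w (π r)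

/-- The last passage time from `p` to `q` with respect to the weights `w`:
the maximum of the weights of all up/right paths from `p` to `q`. -/
noncomputable def lpt (w : ℤ × ℤ → ℝ) (p q : ℤ × ℤ) : ℝ :=
  sSup {W : ℝ | ∃ ℓ : ℕ, ∃ π : ℕ → ℤ × ℤ, IsURPath π ℓ p q ∧ W = pathWeight w π ℓ}

namespace LPPaux

lemma step_bounds {π : ℕ → ℤ × ℤ} {ℓ : ℕ} {p q : ℤ × ℤ} (h : IsURPath π ℓ p q)
    {r : ℕ} (hr : r < ℓ) :
    ((π (r+1)).1 = (π r).1 + 1 ∧ (π (r+1)).2 = (π r).2) ∨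
    ((π (r+1)).1 = (π r).1 ∧ (π (r+1)).2 = (π r).2 + 1) := by
  rcases h.2.2 r hr with hs | hs <;> [left; right] <;>
    · rw [Prod.ext_iff] at hs
      simp only [Prod.fst_sub, Prod.snd_sub] at hs
      omega

lemma coordsum {π : ℕ → ℤ × ℤ} {ℓ : ℕ} {p q : ℤ × ℤ} (h : IsURPath π ℓ p q) :
    ∀ r, r ≤ ℓ → (π r).1 + (π r).2 = p.1 + p.2 + r := by
  intro r
  induction r with
  | zero => intro _; simp [h.1]
  | succ n ih =>
    intro hr
    have hn := ih (by omega)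
    rcases step_bounds h (show n < ℓ by omega) with ⟨h1, h2⟩ | ⟨h1, h2⟩ <;>
      · push_cast
        omega

lemma mono_fst {π : ℕ → ℤ × ℤ} {ℓ : ℕ} {p q : ℤ × ℤ} (h : IsURPath π ℓ p q) :
    ∀ r s, r ≤ s → s ≤ ℓ → (π r).1 ≤ (π s).1 := by
  intro r s hrs
  induction s with
  | zero => intro _; obtain rfl : r = 0 := Nat.le_zero.mp hrs; rfl
  | succ n ih =>
    intro hn
    rcases Nat.eq_or_lt_of_le hrs with he | hl
    · rw [he]
    · have := ih (by omega) (by omega)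
      rcases step_bounds h (show n < ℓ by omega) with ⟨h1, _⟩ | ⟨h1, _⟩ <;> omega

lemma mono_snd {π : ℕ → ℤ × ℤ} {ℓ : ℕ} {p q : ℤ × ℤ} (h : IsURPath π ℓ p q) :
    ∀ r s, r ≤ s → s ≤ ℓ → (π r).2 ≤ (π s).2 := by
  intro r s hrs
  induction s with
  | zero => intro _; obtain rfl : r = 0 := Nat.le_zero.mp hrs; rfl
  | succ n ih =>
    intro hn
    rcases Nat.eq_or_lt_of_le hrs with he | hl
    · rw [he]
    · have := ih (by omega) (by omega)
      rcases step_bounds h (show n < ℓ by omega) with ⟨_, h2⟩ | ⟨_, h2⟩ <;> omega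

lemma mem_rect {π : ℕ → ℤ × ℤ} {ℓ : ℕ} {p q : ℤ × ℤ} (h : IsURPath π ℓ p q)
    {r : ℕ} (hr : r ≤ ℓ) : p ≤ π r ∧ π r ≤ q := by
  have h1 := mono_fst h 0 r (by omega) hr
  have h2 := mono_snd h 0 r (by omega) hr
  have h3 := mono_fst h r ℓ hr le_rfl
  have h4 := mono_snd h r ℓ hr le_rfl
  rw [h.1] at h1 h2; rw [h.2.1] at h3 h4
  exact ⟨⟨h1, h2⟩, ⟨h3, h4⟩⟩

lemma inj_on {π : ℕ → ℤ × ℤ} {ℓ : ℕ} {p q : ℤ × ℤ} (h : IsURPath π ℓ p q)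
    {a b : ℕ} (ha : a ≤ ℓ) (hb : b ≤ ℓ) (hab : π a = π b) : a = b := by
  have h1 := coordsum h a ha
  have h2 := coordsum h b hb
  rw [hab] at h1
  omega

lemma bddAbove_S (w : ℤ × ℤ → ℝ) (hw : ∀ p, 0 ≤ w p) (p q : ℤ × ℤ) :
    BddAbove {W : ℝ | ∃ ℓ : ℕ, ∃ π : ℕ → ℤ × ℤ, IsURPath π ℓ p q ∧ W = pathWeight w π ℓ} := by
  refine ⟨∑ x ∈ Finset.Icc p q, w x, ?_⟩
  rintro W ⟨ℓ, π, h, rfl⟩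
  have hinj : Set.InjOn π (Finset.range (ℓ+1)) := by
    intro a ha b hb hab
    simp only [Finset.coe_range, Set.mem_Iio] at ha hb
    exact inj_on h (by omega) (by omega) hab
  calc pathWeight w π ℓ = ∑ x ∈ (Finset.range (ℓ+1)).image π, w x := by
        rw [Finset.sum_image (fun a ha b hb hab => hinj ha hb hab)]
        rfl
    _ ≤ ∑ x ∈ Finset.Icc p q, w x := by
        apply Finset.sum_le_sum_of_subset_of_nonneg
        · intro x hx
          simp only [Finset.mem_image, Finset.mem_range] at hx
          obtain ⟨r, hr, rfl⟩ := hx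
          rw [Finset.mem_Icc]
          exact mem_rect h (by omega)
        · intro x _ _; exact hw x

lemma exists_path (p q : ℤ × ℤ) (h1 : p.1 ≤ q.1) (h2 : p.2 ≤ q.2) :
    ∃ ℓ : ℕ, ∃ π : ℕ → ℤ × ℤ, IsURPath π ℓ p q := by
  obtain ⟨a, hca⟩ : ∃ a : ℕ, (a : ℤ) = q.1 - p.1 := ⟨(q.1 - p.1).toNat, Int.toNat_of_nonneg (by omega)⟩
  obtain ⟨b, hcb⟩ : ∃ b : ℕ, (b : ℤ) = q.2 - p.2 := ⟨(q.2 - p.2).toNat, Int.toNat_of_nonneg (by omega)⟩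
  refine ⟨a + b, fun r => if r ≤ a then (p.1 + r, p.2) else (q.1, p.2 + (r - a : ℕ)), ?_, ?_, ?_⟩
  · beta_reduce; simp
  · beta_reduce
    by_cases hb0 : b = 0
    · subst hb0
      rw [if_pos (by omega), Prod.ext_iff]
      constructor <;> omega
    · rw [if_neg (by omega), Prod.ext_iff]
      constructor <;> omega
  · intro r hr
    beta_reduce
    rcases Nat.lt_or_ge r a with hra | hra
    · left
      rw [if_pos (by omega), if_pos (by omega), Prod.ext_iff]
      simp only [Prod.fst_sub, Prod.snd_sub]
      constructor <;> omega
    · right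
      rcases Nat.eq_or_lt_of_le hra with he | hl
      · rw [if_neg (by omega), if_pos (by omega), Prod.ext_iff]
        simp only [Prod.fst_sub, Prod.snd_sub]
        constructor <;> omega
      · rw [if_neg (by omega), if_neg (by omega), Prod.ext_iff]
        simp only [Prod.fst_sub, Prod.snd_sub]
        constructor <;> omega


lemma split {π : ℕ → ℤ × ℤ} {ℓ : ℕ} {p q : ℤ × ℤ} (h : IsURPath π ℓ p q)
    {m : ℕ} (hm : m ≤ ℓ) (w : ℤ × ℤ → ℝ) :
    IsURPath π m p (π m) ∧ IsURPath (fun r => π (m + r)) (ℓ - m) (π m) q ∧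
      pathWeight w π ℓ + w (π m) = pathWeight w π m + pathWeight w (fun r => π (m + r)) (ℓ - m) := by
  refine ⟨⟨h.1, rfl, fun r hr => h.2.2 r (by omega)⟩, ⟨by simp, ?_, ?_⟩, ?_⟩
  · show π (m + (ℓ - m)) = q
    rw [show m + (ℓ - m) = ℓ by omega, h.2.1]
  · intro r hr
    show π (m + (r + 1)) - π (m + r) = _ ∨ _
    rw [show m + (r + 1) = (m + r) + 1 by omega]
    exact h.2.2 (m + r) (by omega)
  · unfold pathWeight
    have key : ℓ + 1 = (m + 1) + (ℓ - m) := by omega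
    rw [key, Finset.sum_range_add]
    have h2 : ∑ r ∈ Finset.range (ℓ - m + 1), w (π (m + r))
        = w (π m) + ∑ i ∈ Finset.range (ℓ - m), w (π (m + 1 + i)) := by
      rw [Finset.sum_range_succ']
      simp only [Nat.add_zero]
      rw [add_comm]
      congr 1
      apply Finset.sum_congr rfl
      intro i _
      have e : m + (i + 1) = m + 1 + i := by omega
      rw [e]
    rw [h2]
    ring

lemma rot (N : ℤ) {π : ℕ → ℤ × ℤ} {ℓ : ℕ} {p q : ℤ × ℤ} (h : IsURPath π ℓ p q)
    (w : ℤ × ℤ → ℝ) (hsym : ∀ i j : ℤ, w (i, j) = w (2 * N + 1 - i, 2 * N + 1 - j)) :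
    IsURPath (fun r => ((2 * N + 1 - (π (ℓ - r)).1, 2 * N + 1 - (π (ℓ - r)).2) : ℤ × ℤ)) ℓ
      (2 * N + 1 - q.1, 2 * N + 1 - q.2) (2 * N + 1 - p.1, 2 * N + 1 - p.2) ∧
    pathWeight w (fun r => ((2 * N + 1 - (π (ℓ - r)).1, 2 * N + 1 - (π (ℓ - r)).2) : ℤ × ℤ)) ℓ
      = pathWeight w π ℓ := by
  refine ⟨⟨?_, ?_, ?_⟩, ?_⟩
  · beta_reduce
    rw [show ℓ - 0 = ℓ from rfl, h.2.1]
  · beta_reduce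
    rw [Nat.sub_self, h.1]
  · intro r hr
    beta_reduce
    have e : ℓ - r = (ℓ - (r + 1)) + 1 := by omega
    rcases step_bounds h (show ℓ - (r + 1) < ℓ by omega) with ⟨h1, h2⟩ | ⟨h1, h2⟩
    · left
      rw [Prod.ext_iff]
      rw [e] at *
      constructor <;> simp <;> omega
    · right
      rw [Prod.ext_iff]
      rw [e] at *
      constructor <;> simp <;> omega
  · unfold pathWeight
    have : ∀ r, w ((2 * N + 1 - (π (ℓ - r)).1, 2 * N + 1 - (π (ℓ - r)).2) : ℤ × ℤ)
        = w (π (ℓ - r)) := by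
      intro r
      rw [← hsym (π (ℓ - r)).1 (π (ℓ - r)).2]
    simp only [this]
    rw [← Finset.sum_range_reflect]
    apply Finset.sum_congr rfl
    intro i hi
    simp only [Finset.mem_range] at hi
    have e : ℓ + 1 - 1 - i = ℓ - i := by omega
    rw [e, show ℓ - (ℓ - i) = i by omega]

lemma concat {π1 π2 : ℕ → ℤ × ℤ} {ℓ1 ℓ2 : ℕ} {p m q : ℤ × ℤ}
    (h1 : IsURPath π1 ℓ1 p m) (h2 : IsURPath π2 ℓ2 m q) (w : ℤ × ℤ → ℝ) :
    ∃ σ : ℕ → ℤ × ℤ, IsURPath σ (ℓ1 + ℓ2) p q ∧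
      pathWeight w σ (ℓ1 + ℓ2) + w m = pathWeight w π1 ℓ1 + pathWeight w π2 ℓ2 := by
  refine ⟨fun r => if r ≤ ℓ1 then π1 r else π2 (r - ℓ1), ⟨?_, ?_, ?_⟩, ?_⟩
  · beta_reduce; rw [if_pos (Nat.zero_le ℓ1), h1.1]
  · beta_reduce
    by_cases h0 : ℓ2 = 0
    · subst h0
      rw [if_pos (by omega), Nat.add_zero, h1.2.1, ← h2.1]
      exact h2.2.1
    · rw [if_neg (by omega), show ℓ1 + ℓ2 - ℓ1 = ℓ2 by omega, h2.2.1]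
  · intro r hr
    beta_reduce
    rcases Nat.lt_or_ge r ℓ1 with hra | hra
    · rw [if_pos (by omega), if_pos (by omega)]
      exact h1.2.2 r hra
    · rcases Nat.eq_or_lt_of_le hra with he | hl
      · rw [if_neg (by omega), if_pos (by omega)]
        rw [show r + 1 - ℓ1 = 0 + 1 by omega, ← he, h1.2.1, ← h2.1]
        exact h2.2.2 0 (by omega)
      · rw [if_neg (by omega), if_neg (by omega)]
        rw [show r + 1 - ℓ1 = (r - ℓ1) + 1 by omega]
        exact h2.2.2 (r - ℓ1) (by omega)
  · unfold pathWeight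
    beta_reduce
    rw [show ℓ1 + ℓ2 + 1 = (ℓ1 + 1) + ℓ2 by omega, Finset.sum_range_add]
    have e1 : ∑ r ∈ Finset.range (ℓ1 + 1), w (if r ≤ ℓ1 then π1 r else π2 (r - ℓ1))
        = ∑ r ∈ Finset.range (ℓ1 + 1), w (π1 r) := by
      apply Finset.sum_congr rfl
      intro r hr
      simp only [Finset.mem_range] at hr
      rw [if_pos (by omega)]
    have e2 : ∑ i ∈ Finset.range ℓ2, w (if ℓ1 + 1 + i ≤ ℓ1 then π1 (ℓ1 + 1 + i) else π2 (ℓ1 + 1 + i - ℓ1))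
        = ∑ i ∈ Finset.range ℓ2, w (π2 (i + 1)) := by
      apply Finset.sum_congr rfl
      intro i _
      rw [if_neg (by omega), show ℓ1 + 1 + i - ℓ1 = i + 1 by omega]
    rw [e1, e2, Finset.sum_range_succ' (fun i => w (π2 i)) ℓ2]
    rw [h2.1]
    ring

lemma set_eq_image (g : ℤ → ℝ) (a b : ℤ) :
    {v : ℝ | ∃ i : ℤ, a ≤ i ∧ i ≤ b ∧ v = g i} = g '' Set.Icc a b := by
  ext v
  simp only [Set.mem_setOf_eq, Set.mem_image, Set.mem_Icc]
  constructor
  · rintro ⟨i, h1, h2, rfl⟩; exact ⟨i, ⟨h1, h2⟩, rfl⟩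
  · rintro ⟨i, ⟨h1, h2⟩, rfl⟩; exact ⟨i, h1, h2, rfl⟩

end LPPaux

open LPPaux

/-- For nonnegative rotationally symmetric weights, the full last passage time is
sandwiched between `M - max_{i} w(i, 2N+1-i)` and `M`, where `M` is the maximum over
anti-diagonal points of the sum of the two point-to-point last passage times. -/
theorem stmt4 (N : ℤ) (hN : 1 ≤ N) (w : ℤ × ℤ → ℝ)
    (hw : ∀ p : ℤ × ℤ, 0 ≤ w p)
    (hsym : ∀ i j : ℤ, w (i, j) = w (2 * N + 1 - i, 2 * N + 1 - j))
    (M D : ℝ)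
    (hM : M = sSup {v : ℝ | ∃ i : ℤ, 1 ≤ i ∧ i ≤ 2 * N ∧
        v = lpt w ((1 : ℤ), (1 : ℤ)) (i, 2 * N + 1 - i)
            + lpt w ((1 : ℤ), (1 : ℤ)) (2 * N + 1 - i, i)})
    (hD : D = sSup {v : ℝ | ∃ i : ℤ, 1 ≤ i ∧ i ≤ 2 * N ∧ v = w (i, 2 * N + 1 - i)}) :
    M - D ≤ lpt w ((1 : ℤ), (1 : ℤ)) ((2 * N, 2 * N) : ℤ × ℤ) ∧
      lpt w ((1 : ℤ), (1 : ℤ)) ((2 * N, 2 * N) : ℤ × ℤ) ≤ M := by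
  
  -- the M-set
  have hMset : {v : ℝ | ∃ i : ℤ, 1 ≤ i ∧ i ≤ 2 * N ∧
      v = lpt w ((1 : ℤ), (1 : ℤ)) (i, 2 * N + 1 - i)
          + lpt w ((1 : ℤ), (1 : ℤ)) (2 * N + 1 - i, i)}
      = (fun i : ℤ => lpt w ((1 : ℤ), (1 : ℤ)) (i, 2 * N + 1 - i)
          + lpt w ((1 : ℤ), (1 : ℤ)) (2 * N + 1 - i, i)) '' Set.Icc 1 (2 * N) :=
    set_eq_image _ 1 (2 * N)
  have hMfin : {v : ℝ | ∃ i : ℤ, 1 ≤ i ∧ i ≤ 2 * N ∧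
      v = lpt w ((1 : ℤ), (1 : ℤ)) (i, 2 * N + 1 - i)
          + lpt w ((1 : ℤ), (1 : ℤ)) (2 * N + 1 - i, i)}.Finite := by
    rw [hMset]; exact (Set.finite_Icc _ _).image _
  have hMne : {v : ℝ | ∃ i : ℤ, 1 ≤ i ∧ i ≤ 2 * N ∧
      v = lpt w ((1 : ℤ), (1 : ℤ)) (i, 2 * N + 1 - i)
          + lpt w ((1 : ℤ), (1 : ℤ)) (2 * N + 1 - i, i)}.Nonempty :=
    ⟨_, ⟨1, le_refl 1, by omega, rfl⟩⟩
  have hMbdd := hMfin.bddAbove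
  -- the D-set
  have hDfin : {v : ℝ | ∃ i : ℤ, 1 ≤ i ∧ i ≤ 2 * N ∧ v = w (i, 2 * N + 1 - i)}.Finite := by
    rw [set_eq_image (fun i : ℤ => w (i, 2 * N + 1 - i)) 1 (2 * N)]
    exact (Set.finite_Icc _ _).image _
  -- upper bound
  have hfull_ne : {W : ℝ | ∃ ℓ : ℕ, ∃ π : ℕ → ℤ × ℤ,
      IsURPath π ℓ ((1 : ℤ), (1 : ℤ)) ((2 * N, 2 * N) : ℤ × ℤ) ∧ W = pathWeight w π ℓ}.Nonempty := by
    obtain ⟨ℓ, π, hπ⟩ := exists_path ((1 : ℤ), (1 : ℤ)) ((2 * N, 2 * N) : ℤ × ℤ)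
      (by simp; omega) (by simp; omega)
    exact ⟨pathWeight w π ℓ, ℓ, π, hπ, rfl⟩
  have hupper : lpt w ((1 : ℤ), (1 : ℤ)) ((2 * N, 2 * N) : ℤ × ℤ) ≤ M := by
    apply csSup_le hfull_ne
    rintro W ⟨ℓ, π, hπ, rfl⟩
    obtain ⟨m, hmz⟩ : ∃ m : ℕ, (m : ℤ) = 2 * N - 1 :=
      ⟨(2 * N - 1).toNat, Int.toNat_of_nonneg (by omega)⟩
    have hℓz := coordsum hπ ℓ le_rfl
    rw [hπ.2.1] at hℓz
    simp only at hℓz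
    have hm : m ≤ ℓ := by omega
    have hc := coordsum hπ m hm
    simp only at hc
    have hle := mem_rect hπ hm
    rw [Prod.le_def, Prod.le_def] at hle
    simp only at hle
    have hc1 : 1 ≤ (π m).1 := hle.1.1
    have hc2 : (π m).1 ≤ 2 * N := by
      have : 1 ≤ (π m).2 := hle.1.2
      omega
    obtain ⟨hs1, hs2, hwsum⟩ := split hπ hm w
    have e2 : (π m).2 = 2 * N + 1 - (π m).1 := by omega
    have hs1' : IsURPath π m ((1 : ℤ), (1 : ℤ)) ((π m).1, 2 * N + 1 - (π m).1) := by
      rw [← e2]; exact hs1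
    have hW1 : pathWeight w π m ∈ {W : ℝ | ∃ ℓ : ℕ, ∃ π' : ℕ → ℤ × ℤ,
        IsURPath π' ℓ ((1 : ℤ), (1 : ℤ)) ((π m).1, 2 * N + 1 - (π m).1) ∧ W = pathWeight w π' ℓ} :=
      ⟨m, π, hs1', rfl⟩
    obtain ⟨hrot, hrotw⟩ := rot N hs2 w hsym
    have est : ((2 * N + 1 - ((2 * N : ℤ), (2 * N : ℤ)).1, 2 * N + 1 - ((2 * N : ℤ), (2 * N : ℤ)).2) : ℤ × ℤ)
        = ((1 : ℤ), (1 : ℤ)) := by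
      rw [Prod.ext_iff]; constructor <;> simp
    have een : ((2 * N + 1 - (π m).1, 2 * N + 1 - (π m).2) : ℤ × ℤ)
        = ((2 * N + 1 - (π m).1, (π m).1) : ℤ × ℤ) := by
      rw [Prod.ext_iff]; constructor
      · rfl
      · simp; omega
    rw [est, een] at hrot
    have hW2 : pathWeight w (fun r => ((2 * N + 1 - (π (m + (ℓ - m - r))).1,
          2 * N + 1 - (π (m + (ℓ - m - r))).2) : ℤ × ℤ)) (ℓ - m)
        ∈ {W : ℝ | ∃ ℓ' : ℕ, ∃ π' : ℕ → ℤ × ℤ,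
        IsURPath π' ℓ' ((1 : ℤ), (1 : ℤ)) ((2 * N + 1 - (π m).1, (π m).1) : ℤ × ℤ)
          ∧ W = pathWeight w π' ℓ'} :=
      ⟨ℓ - m, _, hrot, rfl⟩
    have hle1 := le_csSup (bddAbove_S w hw ((1 : ℤ), (1 : ℤ)) ((π m).1, 2 * N + 1 - (π m).1)) hW1
    have hle2 := le_csSup (bddAbove_S w hw ((1 : ℤ), (1 : ℤ)) ((2 * N + 1 - (π m).1, (π m).1) : ℤ × ℤ)) hW2
    have hmemM : lpt w ((1 : ℤ), (1 : ℤ)) ((π m).1, 2 * N + 1 - (π m).1)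
        + lpt w ((1 : ℤ), (1 : ℤ)) ((2 * N + 1 - (π m).1, (π m).1) : ℤ × ℤ) ≤ M := by
      rw [hM]
      exact le_csSup hMbdd ⟨(π m).1, hc1, hc2, rfl⟩
    have hwc : 0 ≤ w (π m) := hw _
    have : pathWeight w π ℓ ≤ pathWeight w π m
        + pathWeight w (fun r => π (m + r)) (ℓ - m) := by linarith
    calc pathWeight w π ℓ ≤ pathWeight w π m
          + pathWeight w (fun r => π (m + r)) (ℓ - m) := this
      _ ≤ lpt w ((1 : ℤ), (1 : ℤ)) ((π m).1, 2 * N + 1 - (π m).1)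
          + lpt w ((1 : ℤ), (1 : ℤ)) ((2 * N + 1 - (π m).1, (π m).1) : ℤ × ℤ) := by
          rw [← hrotw]; exact add_le_add hle1 hle2
      _ ≤ M := hmemM
  refine ⟨?_, hupper⟩
  -- lower bound
  have hMmem : M ∈ {v : ℝ | ∃ i : ℤ, 1 ≤ i ∧ i ≤ 2 * N ∧
      v = lpt w ((1 : ℤ), (1 : ℤ)) (i, 2 * N + 1 - i)
          + lpt w ((1 : ℤ), (1 : ℤ)) (2 * N + 1 - i, i)} := by
    rw [hM]; exact hMne.csSup_mem hMfin
  obtain ⟨i₀, hi1, hi2, hMeq⟩ := hMmem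
  have hwD : w (i₀, 2 * N + 1 - i₀) ≤ D := by
    rw [hD]
    exact le_csSup hDfin.bddAbove ⟨i₀, hi1, hi2, rfl⟩
  apply le_of_forall_pos_le_add
  intro ε hε
  have hS1ne : {W : ℝ | ∃ ℓ : ℕ, ∃ π : ℕ → ℤ × ℤ,
      IsURPath π ℓ ((1 : ℤ), (1 : ℤ)) (i₀, 2 * N + 1 - i₀) ∧ W = pathWeight w π ℓ}.Nonempty := by
    obtain ⟨ℓ, π, hπ⟩ := exists_path ((1 : ℤ), (1 : ℤ)) (i₀, 2 * N + 1 - i₀)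
      (by simp; omega) (by simp; omega)
    exact ⟨_, ℓ, π, hπ, rfl⟩
  have hS2ne : {W : ℝ | ∃ ℓ : ℕ, ∃ π : ℕ → ℤ × ℤ,
      IsURPath π ℓ ((1 : ℤ), (1 : ℤ)) (2 * N + 1 - i₀, i₀) ∧ W = pathWeight w π ℓ}.Nonempty := by
    obtain ⟨ℓ, π, hπ⟩ := exists_path ((1 : ℤ), (1 : ℤ)) (2 * N + 1 - i₀, i₀)
      (by simp; omega) (by simp; omega)
    exact ⟨_, ℓ, π, hπ, rfl⟩
  obtain ⟨W1, hW1mem, hW1⟩ := exists_lt_of_lt_csSup hS1ne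
    (show lpt w ((1 : ℤ), (1 : ℤ)) (i₀, 2 * N + 1 - i₀) - ε / 2
        < lpt w ((1 : ℤ), (1 : ℤ)) (i₀, 2 * N + 1 - i₀) by linarith)
  obtain ⟨W2, hW2mem, hW2⟩ := exists_lt_of_lt_csSup hS2ne
    (show lpt w ((1 : ℤ), (1 : ℤ)) (2 * N + 1 - i₀, i₀) - ε / 2
        < lpt w ((1 : ℤ), (1 : ℤ)) (2 * N + 1 - i₀, i₀) by linarith)
  obtain ⟨ℓ1, π1, hπ1, rfl⟩ := hW1mem
  obtain ⟨ℓ2, π2, hπ2, rfl⟩ := hW2mem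
  obtain ⟨hrot, hrotw⟩ := rot N hπ2 w hsym
  have est : ((2 * N + 1 - ((2 * N + 1 - i₀ : ℤ), (i₀ : ℤ)).1,
      2 * N + 1 - ((2 * N + 1 - i₀ : ℤ), (i₀ : ℤ)).2) : ℤ × ℤ) = ((i₀ : ℤ), (2 * N + 1 - i₀ : ℤ)) := by
    rw [Prod.ext_iff]; constructor <;> simp
  have een : ((2 * N + 1 - (((1 : ℤ), (1 : ℤ)) : ℤ × ℤ).1, 2 * N + 1 - (((1 : ℤ), (1 : ℤ)) : ℤ × ℤ).2) : ℤ × ℤ)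
      = ((2 * N : ℤ), (2 * N : ℤ)) := by
    rw [Prod.ext_iff]; constructor <;> simp
  rw [est, een] at hrot
  obtain ⟨σ, hσ, hσw⟩ := concat hπ1 hrot w
  have hσmem : pathWeight w σ (ℓ1 + ℓ2) ∈ {W : ℝ | ∃ ℓ : ℕ, ∃ π : ℕ → ℤ × ℤ,
      IsURPath π ℓ ((1 : ℤ), (1 : ℤ)) ((2 * N, 2 * N) : ℤ × ℤ) ∧ W = pathWeight w π ℓ} :=
    ⟨ℓ1 + ℓ2, σ, hσ, rfl⟩
  have hfin := le_csSup (bddAbove_S w hw ((1 : ℤ), (1 : ℤ)) ((2 * N, 2 * N) : ℤ × ℤ)) hσmem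
  rw [hrotw] at hσw
  rw [hMeq]
  have : lpt w ((1 : ℤ), (1 : ℤ)) ((2 * N, 2 * N) : ℤ × ℤ) ≥ pathWeight w σ (ℓ1 + ℓ2) := hfin
  linarith
end

section
/- Fix an integer N ≥ 1 and weights w : ℤ × ℤ → ℝ satisfying the reflection symmetry about the anti-diagonal, w(i,j) = w(2N+1−j, 2N+1−i) for all i, j. Then for every 1 ≤ i ≤ 2N, G_w((1,1) → (i, 2N+1−i)) = G_w((i, 2N+1−i) → (2N,2N)), and consequently G_w((1,1) → (2N,2N)) = max_{1 ≤ i ≤ 2N} [ 2·G_w((1,1) → (i, 2N+1−i)) − w(i, 2N+1−i) ]. -/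
open MeasureTheory Filter

namespace LPTaux

def pathSet (w : ℤ × ℤ → ℝ) (p q : ℤ × ℤ) : Set ℝ :=
  {W : ℝ | ∃ ℓ : ℕ, ∃ π : ℕ → ℤ × ℤ, IsURPath π ℓ p q ∧ W = pathWeight w π ℓ}

lemma lpt_eq (w : ℤ × ℤ → ℝ) (p q : ℤ × ℤ) : lpt w p q = sSup (pathSet w p q) := rfl

variable {w : ℤ × ℤ → ℝ} {π : ℕ → ℤ × ℤ} {ℓ : ℕ} {p q : ℤ × ℤ}

lemma step_cases (h : IsURPath π ℓ p q) {r : ℕ} (hr : r < ℓ) :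
    ((π (r+1)).1 = (π r).1 + 1 ∧ (π (r+1)).2 = (π r).2) ∨
    ((π (r+1)).1 = (π r).1 ∧ (π (r+1)).2 = (π r).2 + 1) := by
  rcases h.2.2 r hr with h2 | h2
  · left
    constructor
    · have := congrArg Prod.fst h2; simp at this; omega
    · have := congrArg Prod.snd h2; simp at this; omega
  · right
    constructor
    · have := congrArg Prod.fst h2; simp at this; omega
    · have := congrArg Prod.snd h2; simp at this; omega

lemma sum_coord (h : IsURPath π ℓ p q) : ∀ r ≤ ℓ, (π r).1 + (π r).2 = p.1 + p.2 + r := by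
  intro r
  induction r with
  | zero => intro _; simp [h.1]
  | succ n ih =>
    intro hn
    have h1 := ih (by omega)
    rcases step_cases h (show n < ℓ by omega) with ⟨ha, hb⟩ | ⟨ha, hb⟩ <;> push_cast <;> push_cast at h1 <;> omega

lemma length_eq (h : IsURPath π ℓ p q) : (ℓ : ℤ) = q.1 + q.2 - p.1 - p.2 := by
  have := sum_coord h ℓ le_rfl
  rw [h.2.1] at this; omega

lemma mono (h : IsURPath π ℓ p q) : ∀ s ≤ ℓ, ∀ r ≤ s, π r ≤ π s := by
  intro s
  induction s with
  | zero => intro _ r hr; interval_cases r; exact le_rfl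
  | succ n ih =>
    intro hs r hr
    rcases Nat.lt_or_ge r (n+1) with h' | h'
    · have h1 : π r ≤ π n := ih (by omega) r (by omega)
      have h2 : π n ≤ π (n+1) := by
        rcases step_cases h (show n < ℓ by omega) with ⟨ha, hb⟩ | ⟨ha, hb⟩ <;>
          exact Prod.le_def.mpr ⟨by omega, by omega⟩
      exact le_trans h1 h2
    · have : r = n + 1 := by omega
      subst this; exact le_rfl

lemma bounds (h : IsURPath π ℓ p q) {r : ℕ} (hr : r ≤ ℓ) : p ≤ π r ∧ π r ≤ q := by
  refine ⟨?_, ?_⟩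
  · have := mono h r hr 0 (by omega); rwa [h.1] at this
  · have := mono h ℓ le_rfl r hr; rwa [h.2.1] at this

lemma pathSet_finite (w : ℤ × ℤ → ℝ) (p q : ℤ × ℤ) : (pathSet w p q).Finite := by
  set L := (q.1 + q.2 - p.1 - p.2).toNat with hL
  haveI := (Set.finite_Icc p q).to_subtype
  apply Set.Finite.subset
    (Set.finite_range (fun g : Fin (L+1) → (Set.Icc p q) => ∑ r : Fin (L+1), w (g r)))
  rintro W ⟨ℓ, π, hπ, rfl⟩
  have hl : ℓ = L := by
    have h1 := length_eq hπ
    have h2 : (0:ℤ) ≤ (ℓ:ℤ) := Int.natCast_nonneg ℓ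
    omega
  subst hl
  refine ⟨fun r => ⟨π r, ?_⟩, ?_⟩
  · have := bounds hπ (show (r:ℕ) ≤ L by omega)
    exact Set.mem_Icc.mpr this
  · simp only [pathWeight]
    rw [Fin.sum_univ_eq_sum_range (fun r => w (π r)) (L+1)]

lemma pathSet_nonempty (hpq : p ≤ q) : (pathSet w p q).Nonempty := by
  obtain ⟨h1, h2⟩ := Prod.le_def.mp hpq
  set a := (q.1 - p.1).toNat with ha
  set b := (q.2 - p.2).toNat with hb
  have ha' : (a : ℤ) = q.1 - p.1 := Int.toNat_of_nonneg (by omega)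
  have hb' : (b : ℤ) = q.2 - p.2 := Int.toNat_of_nonneg (by omega)
  refine ⟨_, a + b, (fun r => if r ≤ a then (p.1 + r, p.2) else (q.1, p.2 + ((r - a : ℕ) : ℤ))),
    ⟨?_, ?_, ?_⟩, rfl⟩
  · simp
  · by_cases hc : a + b ≤ a
    · have hb0 : b = 0 := by omega
      simp only [if_pos hc]
      have : ((a+b : ℕ) : ℤ) = q.1 - p.1 := by omega
      exact Prod.ext (by omega) (by omega)
    · simp only [if_neg hc]
      have : ((a + b - a : ℕ) : ℤ) = q.2 - p.2 := by push_cast; omega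
      exact Prod.ext rfl (by omega)
  · intro r hr
    by_cases hc : r + 1 ≤ a
    · left
      simp only [if_pos hc, if_pos (show r ≤ a by omega)]
      simp [Prod.ext_iff]
      all_goals omega
    · right
      by_cases hc2 : r ≤ a
      · have hra : r = a := by omega
        simp only [if_neg hc, if_pos hc2]
        simp [Prod.ext_iff]
        all_goals omega
      · simp only [if_neg hc, if_neg hc2]
        simp [Prod.ext_iff]
        all_goals omega

lemma lpt_mem (hpq : p ≤ q) : lpt w p q ∈ pathSet w p q :=
  Set.Nonempty.csSup_mem (pathSet_nonempty hpq) (pathSet_finite w p q)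

lemma le_lpt (hπ : IsURPath π ℓ p q) : pathWeight w π ℓ ≤ lpt w p q :=
  le_csSup (pathSet_finite w p q).bddAbove ⟨ℓ, π, hπ, rfl⟩


def rfl' (N : ℤ) (p : ℤ × ℤ) : ℤ × ℤ := (2 * N + 1 - p.2, 2 * N + 1 - p.1)

lemma rfl'_rfl' (N : ℤ) (p : ℤ × ℤ) : rfl' N (rfl' N p) = p := by
  simp [rfl']

lemma w_rfl' {N : ℤ} (hsym : ∀ i j : ℤ, w (i, j) = w (2 * N + 1 - j, 2 * N + 1 - i))
    (x : ℤ × ℤ) : w (rfl' N x) = w x := by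
  rw [rfl', ← hsym x.1 x.2]

lemma pathSet_rfl'_subset {N : ℤ}
    (hsym : ∀ i j : ℤ, w (i, j) = w (2 * N + 1 - j, 2 * N + 1 - i)) (p q : ℤ × ℤ) :
    pathSet w p q ⊆ pathSet w (rfl' N q) (rfl' N p) := by
  rintro W ⟨ℓ, π, hπ, rfl⟩
  refine ⟨ℓ, fun r => rfl' N (π (ℓ - r)), ⟨by simp [hπ.2.1], by simp [hπ.1], ?_⟩, ?_⟩
  · intro r hr
    set s := ℓ - r - 1 with hs
    have h1 : ℓ - r = s + 1 := by omega
    have h2 : ℓ - (r + 1) = s := by omega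
    show rfl' N (π (ℓ - (r+1))) - rfl' N (π (ℓ - r)) = ((1:ℤ),(0:ℤ)) ∨
      rfl' N (π (ℓ - (r+1))) - rfl' N (π (ℓ - r)) = ((0:ℤ),(1:ℤ))
    rw [h1, h2]
    rcases step_cases hπ (show s < ℓ by omega) with ⟨ha, hb⟩ | ⟨ha, hb⟩
    · right
      simp [rfl', Prod.ext_iff]
      all_goals omega
    · left
      simp [rfl', Prod.ext_iff]
      all_goals omega
  · unfold pathWeight
    have hw : ∀ r, w (rfl' N (π (ℓ - r))) = w (π (ℓ - r)) := fun r => w_rfl' hsym _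
    simp only [hw]
    rw [← Finset.sum_range_reflect (fun r => w (π r)) (ℓ + 1)]
    apply Finset.sum_congr rfl
    intro x hx
    simp only [Finset.mem_range] at hx
    congr 2 <;> omega

lemma lpt_rfl' {N : ℤ}
    (hsym : ∀ i j : ℤ, w (i, j) = w (2 * N + 1 - j, 2 * N + 1 - i)) (p q : ℤ × ℤ) :
    lpt w p q = lpt w (rfl' N q) (rfl' N p) := by
  rw [lpt_eq, lpt_eq]
  congr 1
  apply Set.Subset.antisymm (pathSet_rfl'_subset hsym p q)
  have := pathSet_rfl'_subset hsym (rfl' N q) (rfl' N p)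
  rwa [rfl'_rfl', rfl'_rfl'] at this

lemma split_left (h : IsURPath π ℓ p q) {r : ℕ} (hr : r ≤ ℓ) : IsURPath π r p (π r) :=
  ⟨h.1, rfl, fun s hs => h.2.2 s (by omega)⟩

lemma split_right (h : IsURPath π ℓ p q) {r : ℕ} (hr : r ≤ ℓ) :
    IsURPath (fun s => π (r + s)) (ℓ - r) (π r) q := by
  refine ⟨by simp, ?_, fun s hs => ?_⟩
  · show π (r + (ℓ - r)) = q
    rw [Nat.add_sub_cancel' hr]
    exact h.2.1
  · show π (r + (s + 1)) - π (r + s) = ((1:ℤ),(0:ℤ)) ∨ π (r + (s + 1)) - π (r + s) = ((0:ℤ),(1:ℤ))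
    rw [show r + (s + 1) = r + s + 1 from by omega]
    exact h.2.2 (r + s) (by omega)

lemma split_weight (hr : r ≤ ℓ) :
    pathWeight w π ℓ = pathWeight w π r + pathWeight w (fun s => π (r + s)) (ℓ - r) - w (π r) := by
  unfold pathWeight
  have h1 : ℓ + 1 = (r + 1) + (ℓ - r) := by omega
  rw [h1, Finset.sum_range_add]
  have h2 : ∑ s ∈ Finset.range (ℓ - r + 1), w (π (r + s))
      = (∑ s ∈ Finset.range (ℓ - r), w (π (r + (s + 1)))) + w (π (r + 0)) :=
    Finset.sum_range_succ' (fun s => w (π (r + s))) (ℓ - r)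
  rw [h2]
  simp only [add_zero]
  have h3 : ∀ s, r + 1 + s = r + (s + 1) := fun s => by omega
  simp only [h3]
  ring

lemma concat {π₁ π₂ : ℕ → ℤ × ℤ} {ℓ₁ ℓ₂ : ℕ} {p m q : ℤ × ℤ}
    (h1 : IsURPath π₁ ℓ₁ p m) (h2 : IsURPath π₂ ℓ₂ m q) :
    IsURPath (fun s => if s ≤ ℓ₁ then π₁ s else π₂ (s - ℓ₁)) (ℓ₁ + ℓ₂) p q ∧
    pathWeight w (fun s => if s ≤ ℓ₁ then π₁ s else π₂ (s - ℓ₁)) (ℓ₁ + ℓ₂)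
      = pathWeight w π₁ ℓ₁ + pathWeight w π₂ ℓ₂ - w m := by
  have hval : ∀ s ≤ ℓ₁ + ℓ₂, (if s ≤ ℓ₁ then π₁ s else π₂ (s - ℓ₁)) = if s ≤ ℓ₁ then π₁ s else π₂ (s - ℓ₁) := fun _ _ => rfl
  constructor
  · refine ⟨by simp [h1.1], ?_, ?_⟩
    · by_cases hc : ℓ₁ + ℓ₂ ≤ ℓ₁
      · have : ℓ₂ = 0 := by omega
        subst this
        simp only [add_zero, if_pos le_rfl]
        rw [h1.2.1, ← h2.1]
        exact h2.2.1
      · simp only [if_neg hc, Nat.add_sub_cancel_left]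
        exact h2.2.1
    · intro s hs
      by_cases hc : s + 1 ≤ ℓ₁
      · simp only [if_pos hc, if_pos (show s ≤ ℓ₁ by omega)]
        exact h1.2.2 s (by omega)
      · by_cases hc2 : s ≤ ℓ₁
        · have hse : s = ℓ₁ := by omega
          subst hse
          simp only [if_neg hc, if_pos le_rfl, Nat.add_sub_cancel_left]
          rw [h1.2.1, ← h2.1]
          exact h2.2.2 0 (by omega)
        · simp only [if_neg hc, if_neg hc2]
          have e1 : s + 1 - ℓ₁ = (s - ℓ₁) + 1 := by omega
          rw [e1]
          exact h2.2.2 (s - ℓ₁) (by omega)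
  · unfold pathWeight
    have h1' : ℓ₁ + ℓ₂ + 1 = (ℓ₁ + 1) + ℓ₂ := by omega
    rw [h1', Finset.sum_range_add]
    have e2 : ∀ i, w (if ℓ₁ + 1 + i ≤ ℓ₁ then π₁ (ℓ₁ + 1 + i) else π₂ (ℓ₁ + 1 + i - ℓ₁)) = w (π₂ (i + 1)) := by
      intro i
      rw [if_neg (by omega)]
      rw [show ℓ₁ + 1 + i - ℓ₁ = i + 1 from by omega]
    have e3 : ∀ i ∈ Finset.range (ℓ₁ + 1), w (if i ≤ ℓ₁ then π₁ i else π₂ (i - ℓ₁)) = w (π₁ i) := by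
      intro i hi
      simp only [Finset.mem_range] at hi
      rw [if_pos (by omega)]
    rw [Finset.sum_congr rfl e3]
    simp only [e2]
    have h4 : ∑ s ∈ Finset.range (ℓ₂ + 1), w (π₂ s)
        = (∑ s ∈ Finset.range ℓ₂, w (π₂ (s + 1))) + w (π₂ 0) :=
      Finset.sum_range_succ' (fun s => w (π₂ s)) ℓ₂
    rw [h4, h2.1]
    ring

end LPTaux

/-- For weights symmetric under reflection about the anti-diagonal, the last passage
times to and from the anti-diagonal agree, and the full last passage time decomposes
as a maximum of twice point-to-point last passage times minus the anti-diagonal weight. -/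
theorem stmt9 (N : ℤ) (hN : 1 ≤ N) (w : ℤ × ℤ → ℝ)
    (hsym : ∀ i j : ℤ, w (i, j) = w (2 * N + 1 - j, 2 * N + 1 - i)) :
    (∀ i : ℤ, 1 ≤ i → i ≤ 2 * N →
      lpt w ((1 : ℤ), (1 : ℤ)) (i, 2 * N + 1 - i)
        = lpt w (i, 2 * N + 1 - i) ((2 * N, 2 * N) : ℤ × ℤ)) ∧
    lpt w ((1 : ℤ), (1 : ℤ)) ((2 * N, 2 * N) : ℤ × ℤ) =
      sSup {v : ℝ | ∃ i : ℤ, 1 ≤ i ∧ i ≤ 2 * N ∧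
        v = 2 * lpt w ((1 : ℤ), (1 : ℤ)) (i, 2 * N + 1 - i) - w (i, 2 * N + 1 - i)} := by
  have e2 : LPTaux.rfl' N ((1 : ℤ), (1 : ℤ)) = ((2 * N, 2 * N) : ℤ × ℤ) := by
    unfold LPTaux.rfl'
    exact Prod.ext (by dsimp; ring) (by dsimp; ring)
  have part1 : ∀ i : ℤ, 1 ≤ i → i ≤ 2 * N →
      lpt w ((1 : ℤ), (1 : ℤ)) (i, 2 * N + 1 - i)
        = lpt w (i, 2 * N + 1 - i) ((2 * N, 2 * N) : ℤ × ℤ) := by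
    intro i hi1 hi2
    have h := LPTaux.lpt_rfl' hsym ((1 : ℤ), (1 : ℤ)) ((i, 2 * N + 1 - i) : ℤ × ℤ)
    have e1 : LPTaux.rfl' N ((i, 2 * N + 1 - i) : ℤ × ℤ) = (i, 2 * N + 1 - i) := by
      unfold LPTaux.rfl'
      exact Prod.ext (by dsimp; ring) (by dsimp)
    rw [e1, e2] at h
    exact h
  refine ⟨part1, ?_⟩
  set B : Set ℝ := {v : ℝ | ∃ i : ℤ, 1 ≤ i ∧ i ≤ 2 * N ∧
    v = 2 * lpt w ((1 : ℤ), (1 : ℤ)) (i, 2 * N + 1 - i) - w (i, 2 * N + 1 - i)} with hBdef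
  have hBsub : B ⊆ (fun i : ℤ => 2 * lpt w ((1 : ℤ), (1 : ℤ)) (i, 2 * N + 1 - i)
      - w (i, 2 * N + 1 - i)) '' (Set.Icc 1 (2 * N)) := by
    rintro v ⟨i, h1, h2, rfl⟩
    exact ⟨i, Set.mem_Icc.mpr ⟨h1, h2⟩, rfl⟩
  have hBfin : B.Finite := Set.Finite.subset ((Set.finite_Icc _ _).image _) hBsub
  have hBne : B.Nonempty :=
    ⟨2 * lpt w ((1 : ℤ), (1 : ℤ)) (1, 2 * N + 1 - 1) - w (1, 2 * N + 1 - 1),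
      1, le_refl 1, by omega, rfl⟩
  have h11 : ((1 : ℤ), (1 : ℤ)) ≤ ((2 * N, 2 * N) : ℤ × ℤ) :=
    Prod.le_def.mpr ⟨by dsimp; omega, by dsimp; omega⟩
  apply le_antisymm
  · obtain ⟨ℓ, π, hπ, hW⟩ := LPTaux.lpt_mem (w := w) h11
    have hr' : ((2 * N - 1).toNat : ℤ) = 2 * N - 1 := Int.toNat_of_nonneg (by omega)
    set r := (2 * N - 1).toNat with hrdef
    have hℓ : (ℓ : ℤ) = 4 * N - 2 := by
      have := LPTaux.length_eq hπ
      dsimp at this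
      omega
    have hrℓ : r ≤ ℓ := by omega
    have hsum := LPTaux.sum_coord hπ r hrℓ
    dsimp at hsum
    set i := (π r).1 with hidef
    have hb := LPTaux.bounds hπ hrℓ
    obtain ⟨hb1, hb2⟩ := Prod.le_def.mp hb.1
    obtain ⟨hb3, hb4⟩ := Prod.le_def.mp hb.2
    dsimp at hb1 hb2 hb3 hb4
    have hi1 : 1 ≤ i := hb1
    have hi2 : i ≤ 2 * N := by omega
    have hmid : π r = (i, 2 * N + 1 - i) := Prod.ext rfl (by dsimp; omega)
    have hs1 := LPTaux.split_left hπ hrℓ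
    have hs2 := LPTaux.split_right hπ hrℓ
    have hw' := LPTaux.split_weight (w := w) (π := π) hrℓ
    have hW1 : pathWeight w π r ≤ lpt w ((1 : ℤ), (1 : ℤ)) (i, 2 * N + 1 - i) := by
      rw [← hmid]; exact LPTaux.le_lpt hs1
    have hW2 : pathWeight w (fun s => π (r + s)) (ℓ - r)
        ≤ lpt w ((1 : ℤ), (1 : ℤ)) (i, 2 * N + 1 - i) := by
      rw [part1 i hi1 hi2, ← hmid]
      exact LPTaux.le_lpt hs2
    have hmem : 2 * lpt w ((1 : ℤ), (1 : ℤ)) (i, 2 * N + 1 - i) - w (i, 2 * N + 1 - i) ∈ B :=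
      ⟨i, hi1, hi2, rfl⟩
    have hle := le_csSup hBfin.bddAbove hmem
    have : lpt w ((1 : ℤ), (1 : ℤ)) ((2 * N, 2 * N) : ℤ × ℤ)
        ≤ 2 * lpt w ((1 : ℤ), (1 : ℤ)) (i, 2 * N + 1 - i) - w (i, 2 * N + 1 - i) := by
      rw [hmid] at hw'
      rw [hW, hw']
      linarith [hW1, hW2]
    linarith
  · apply csSup_le hBne
    rintro v ⟨i, hi1, hi2, rfl⟩
    have h1m : ((1 : ℤ), (1 : ℤ)) ≤ ((i, 2 * N + 1 - i) : ℤ × ℤ) :=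
      Prod.le_def.mpr ⟨by dsimp; omega, by dsimp; omega⟩
    have hm2 : ((i, 2 * N + 1 - i) : ℤ × ℤ) ≤ ((2 * N, 2 * N) : ℤ × ℤ) :=
      Prod.le_def.mpr ⟨by dsimp; omega, by dsimp; omega⟩
    obtain ⟨ℓ₁, π₁, hp1, he1⟩ := LPTaux.lpt_mem (w := w) h1m
    obtain ⟨ℓ₂, π₂, hp2, he2⟩ := LPTaux.lpt_mem (w := w) hm2
    obtain ⟨hcat, hwcat⟩ := LPTaux.concat (w := w) hp1 hp2
    have hle := LPTaux.le_lpt (w := w) hcat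
    rw [hwcat, ← he1, ← he2, ← part1 i hi1 hi2] at hle
    linarith
end

section
/- Let q : ℝ → ℝ be twice differentiable and satisfy the Painlevé II equation q''(x) = 2 q(x)³ + x q(x) for all x ∈ ℝ, and suppose that q(x) → 0, q'(x) → 0, and x·q(x)² → 0 as x → +∞. Then for every x ∈ ℝ the function s ↦ q(s)² is integrable on [x, ∞) and ∫_x^∞ q(s)² ds = q'(x)² − q(x)⁴ − x q(x)²; equivalently, p(x) := ∫_∞^x q(y)² dy = q(x)⁴ + x q(x)² − q'(x)². -/
open MeasureTheory Filter Set

/-!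
Along a solution of Painlevé II, `E = q'^2 - q^4 - x q^2` satisfies
`E' = 2 q' (q'' - 2 q^3 - x q) - q^2 = -q^2`, and the decay hypotheses say exactly that
`E → 0` at `+∞`. Since `-E` is monotone with limit `0`, its derivative `q^2 ≥ 0` is integrable on `[x, ∞)` with integral `E(x)`.
-/

theorem integrableOn_Ici_and_integral_Ici_eq_of_hasDerivAt_of_nonneg {f g : ℝ → ℝ} {a l : ℝ}
    (hderiv : ∀ x ∈ Ici a, HasDerivAt g (f x) x) (hf : ∀ x ∈ Ioi a, 0 ≤ f x)
    (hl : Tendsto g atTop (nhds l)) :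
    IntegrableOn f (Ici a) ∧ ∫ x in Ici a, f x = l - g a := by
  have hcont : ContinuousWithinAt g (Ici a) a :=
    (hderiv a self_mem_Ici).continuousAt.continuousWithinAt
  have hderiv' : ∀ x ∈ Ioi a, HasDerivAt g (f x) x :=
    fun x hx => hderiv x (Ioi_subset_Ici_self hx)
  refine ⟨(integrableOn_Ici_iff_integrableOn_Ioi).2 ?_, ?_⟩
  · exact integrableOn_Ioi_deriv_of_nonneg hcont hderiv' hf hl
  · rw [integral_Ici_eq_integral_Ioi]
    exact integral_Ioi_of_hasDerivAt_of_nonneg hcont hderiv' hf hl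

theorem hasDerivAt_painleveII_energy {q q' q'' : ℝ → ℝ} {x : ℝ}
    (hq' : HasDerivAt q (q' x) x) (hq'' : HasDerivAt q' (q'' x) x)
    (hPII : q'' x = 2 * q x ^ 3 + x * q x) :
    HasDerivAt (fun s => q' s ^ 2 - q s ^ 4 - s * q s ^ 2) (-q x ^ 2) x := by
  refine (((hq''.fun_pow 2).fun_sub (hq'.fun_pow 4)).fun_sub
    ((hasDerivAt_id' x).fun_mul (hq'.fun_pow 2))).congr_deriv ?_
  rw [hPII]
  ring

/-- If `q` solves the Painlevé II equation and `q`, `q'`, `x q(x)^2` vanish at `+∞`,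
then `q^2` is integrable on `[x, ∞)` and
`∫_x^∞ q(s)^2 ds = q'(x)^2 - q(x)^4 - x q(x)^2`. -/
theorem stmt11 (q q' q'' : ℝ → ℝ)
    (hq' : ∀ x, HasDerivAt q (q' x) x)
    (hq'' : ∀ x, HasDerivAt q' (q'' x) x)
    (hPII : ∀ x, q'' x = 2 * q x ^ 3 + x * q x)
    (hq0 : Tendsto q atTop (nhds 0))
    (hq'0 : Tendsto q' atTop (nhds 0))
    (hxq0 : Tendsto (fun x => x * q x ^ 2) atTop (nhds 0)) :
    ∀ x : ℝ, IntegrableOn (fun s => q s ^ 2) (Set.Ici x) ∧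
      ∫ s in Set.Ici x, q s ^ 2 = q' x ^ 2 - q x ^ 4 - x * q x ^ 2 := by
  intro x
  have henergy_lim : Tendsto (fun s => -(q' s ^ 2 - q s ^ 4 - s * q s ^ 2)) atTop (nhds 0) := by
    simpa using (((hq'0.pow 2).sub (hq0.pow 4)).sub hxq0).neg
  have henergy_deriv : ∀ s ∈ Ici x,
      HasDerivAt (fun s => -(q' s ^ 2 - q s ^ 4 - s * q s ^ 2)) (q s ^ 2) s := fun s _ => by
    simpa only [neg_neg] using (hasDerivAt_painleveII_energy (hq' s) (hq'' s) (hPII s)).fun_neg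
  simpa using integrableOn_Ici_and_integral_Ici_eq_of_hasDerivAt_of_nonneg henergy_deriv
    (fun s _ => sq_nonneg (q s)) henergy_lim
end
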